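/- arXiv:1607.02738 — 5 statements merged into one kernel-verified Lean document; each statement's English description precedes it below -/
import Mathlib

section
/- Let m be a positive natural number, let A be an invertible antisymmetric m×m real matrix (Aᵀ = -A), and let S : ℝ → Matrix(m,m,ℝ) with S(t) symmetric (S(t)ᵀ = S(t)) for every t. Suppose F : ℝ → Matrix(m,m,ℝ) is differentiable, satisfies the variational equation F'(t) = A · S(t) · F(t) for all t ∈ ℝ, and F(0) = I. Then F(t) is symplectic with respect to A for all t, i.e., F(t)ᵀ · A⁻¹ · F(t) = A⁻¹ for all t ∈ ℝ. -/
/-!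
Along a solution of `F' = M F` with `M = A S`, the derivative of `Fᵀ A⁻¹ F` is
`Fᵀ (Mᵀ A⁻¹ + A⁻¹ M) F`. Antisymmetry of `A` and symmetry of `S` turn `Mᵀ A⁻¹ + A⁻¹ M` into
`-S A A⁻¹ + A⁻¹ A S = 0`. So `Fᵀ A⁻¹ F` is constant, equal to its value `A⁻¹` at `t = 0`.
-/

open Matrix

namespace Matrix

variable {n : Type*} [Fintype n] [DecidableEq n] {α : Type*} [CommRing α]

theorem transpose_mul_nonsing_inv_add_nonsing_inv_mul_eq_zero {A S : Matrix n n α}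
    (hA : Aᵀ = -A) (hS : Sᵀ = S) : (A * S)ᵀ * A⁻¹ + A⁻¹ * (A * S) = 0 := by
  by_cases hdet : IsUnit A.det
  · calc (A * S)ᵀ * A⁻¹ + A⁻¹ * (A * S) = -(S * (A * A⁻¹)) + A⁻¹ * A * S := by
          rw [transpose_mul, hS, hA]; noncomm_ring
      _ = 0 := by rw [mul_nonsing_inv A hdet, nonsing_inv_mul A hdet]; noncomm_ring
  · simp [nonsing_inv_apply_not_isUnit A hdet]

end Matrix

section EntrywiseDeriv

variable {𝕜 : Type*} [NontriviallyNormedField 𝕜] {l m n : Type*} {t : 𝕜}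

theorem hasDerivAt_matrix_transpose {P : 𝕜 → Matrix m n 𝕜} {P' : Matrix m n 𝕜}
    (hP : ∀ i j, HasDerivAt (fun s => P s i j) (P' i j) t) :
    ∀ i j, HasDerivAt (fun s => (P s)ᵀ i j) (P'ᵀ i j) t :=
  fun i j => hP j i

theorem hasDerivAt_matrix_mul [Fintype m] {P : 𝕜 → Matrix l m 𝕜} {Q : 𝕜 → Matrix m n 𝕜}
    {P' : Matrix l m 𝕜} {Q' : Matrix m n 𝕜}
    (hP : ∀ i j, HasDerivAt (fun s => P s i j) (P' i j) t)
    (hQ : ∀ i j, HasDerivAt (fun s => Q s i j) (Q' i j) t) :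
    ∀ i j, HasDerivAt (fun s => (P s * Q s) i j) ((P' * Q t + P t * Q') i j) t := by
  intro i j
  simp only [mul_apply, Matrix.add_apply, ← Finset.sum_add_distrib]
  exact HasDerivAt.fun_sum fun k _ => (hP i k).fun_mul (hQ k j)

end EntrywiseDeriv

theorem transpose_mul_mul_eq_of_hasDerivAt {𝕜 : Type*} [RCLike 𝕜] {n : Type*} [Fintype n]
    {B : Matrix n n 𝕜} {M F : 𝕜 → Matrix n n 𝕜} (hM : ∀ t, (M t)ᵀ * B + B * M t = 0)
    (hF : ∀ t i j, HasDerivAt (fun s => F s i j) ((M t * F t) i j) t) (t : 𝕜) :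
    (F t)ᵀ * B * F t = (F 0)ᵀ * B * F 0 := by
  have hderiv : ∀ s i j, HasDerivAt (fun s => ((F s)ᵀ * B * F s) i j) 0 s := by
    intro s i j
    have hB : ∀ i j, HasDerivAt (fun _ => B i j) ((0 : Matrix n n 𝕜) i j) s :=
      fun _ _ => hasDerivAt_const _ _
    have h := hasDerivAt_matrix_mul (hasDerivAt_matrix_mul (hasDerivAt_matrix_transpose (hF s)) hB)
      (hF s) i j
    have hzero : ((M s * F s)ᵀ * B + (F s)ᵀ * 0) * F s + (F s)ᵀ * B * (M s * F s) = 0 := by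
      calc _ = (F s)ᵀ * ((M s)ᵀ * B + B * M s) * F s := by
              simp only [transpose_mul, Matrix.mul_zero, add_zero]; noncomm_ring
        _ = 0 := by rw [hM s, Matrix.mul_zero, Matrix.zero_mul]
    rwa [hzero] at h
  ext i j
  exact is_const_of_deriv_eq_zero (fun s => (hderiv s i j).differentiableAt)
    (fun s => (hderiv s i j).deriv) t 0

theorem symplecticity_noncanonical_general
    (m : ℕ)
    (A : Matrix (Fin m) (Fin m) ℝ) (hA : Aᵀ = -A)
    (S : ℝ → Matrix (Fin m) (Fin m) ℝ) (hS : ∀ t : ℝ, (S t)ᵀ = S t)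
    (F : ℝ → Matrix (Fin m) (Fin m) ℝ)
    (hF : ∀ (t : ℝ) (i j : Fin m), HasDerivAt (fun s => F s i j) ((A * S t * F t) i j) t)
    (hF0 : F 0 = 1) :
    ∀ t : ℝ, (F t)ᵀ * A⁻¹ * F t = A⁻¹ := by
  intro t
  have hAS : ∀ t, (A * S t)ᵀ * A⁻¹ + A⁻¹ * (A * S t) = 0 := fun t =>
    transpose_mul_nonsing_inv_add_nonsing_inv_mul_eq_zero hA (hS t)
  rw [transpose_mul_mul_eq_of_hasDerivAt hAS hF t, hF0, transpose_one, Matrix.one_mul,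
    Matrix.mul_one]

/-- Symplecticity of the Jacobian of a non-canonical Hamiltonian flow: if `A` is invertible
and antisymmetric, `S t` is symmetric for all `t`, and `F` solves the variational equation
`F' = A S F` with `F 0 = 1`, then `F tᵀ A⁻¹ F t = A⁻¹` for all `t`. -/
theorem symplecticity_noncanonical
    (m : ℕ) (hm : 0 < m)
    (A : Matrix (Fin m) (Fin m) ℝ) (hA : Aᵀ = -A) (hAinv : IsUnit A.det)
    (S : ℝ → Matrix (Fin m) (Fin m) ℝ) (hS : ∀ t : ℝ, (S t)ᵀ = S t)
    (F : ℝ → Matrix (Fin m) (Fin m) ℝ)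
    (hF : ∀ (t : ℝ) (i j : Fin m), HasDerivAt (fun s => F s i j) ((A * S t * F t) i j) t)
    (hF0 : F 0 = 1) :
    ∀ t : ℝ, (F t)ᵀ * A⁻¹ * F t = A⁻¹ :=
  symplecticity_noncanonical_general m A hA S hS F hF hF0
end

section
/- Let m be a positive natural number, let A be an invertible antisymmetric m×m real matrix (Aᵀ = -A), and let S : ℝ → Matrix(m,m,ℝ) with S(t) symmetric for every t. Suppose F : ℝ → Matrix(m,m,ℝ) is differentiable, satisfies F'(t) = A · S(t) · F(t) for all t ∈ ℝ, and F(0) = I. Then the flow is volume-preserving: (det F(t))² = 1 for all t ∈ ℝ. -/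
/-! Liouville's formula gives `(det F)' = tr (A S) · det F`, and `tr (A S) = 0` because the trace
form pairs antisymmetric and symmetric matrices to zero. Hence `det F` stays equal to
`det F(0) = 1`. -/

open Matrix

namespace Matrix

variable {n R : Type*} [Fintype n] [CommRing R]

theorem det_updateCol_eq_sum_perm [DecidableEq n] (A : Matrix n n R) (i : n) (v : n → R) :
    (A.updateCol i v).det =
      ∑ σ : Equiv.Perm n, Equiv.Perm.sign σ • ((∏ j ∈ Finset.univ.erase i, A (σ j) j) * v (σ i)) := by
  rw [det_apply]
  refine Finset.sum_congr rfl fun σ _ => ?_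
  rw [← Finset.prod_erase_mul _ _ (Finset.mem_univ i)]
  congr 2
  · exact Finset.prod_congr rfl fun j hj => by simp [updateCol_ne (Finset.ne_of_mem_erase hj)]
  · simp

theorem trace_adjugate_mul_mul_self [DecidableEq n] (A M : Matrix n n R) :
    trace (adjugate A * (M * A)) = A.det * trace M := by
  rw [trace_mul_comm, Matrix.mul_assoc, mul_adjugate, Matrix.mul_smul, Matrix.mul_one, trace_smul,
    smul_eq_mul]

theorem trace_mul_eq_zero_of_transpose_eq_neg [IsAddTorsionFree R] {A S : Matrix n n R}
    (hA : Aᵀ = -A) (hS : Sᵀ = S) : trace (A * S) = 0 := by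
  refine self_eq_neg.mp ?_
  calc trace (A * S) = trace (A * S)ᵀ := (trace_transpose _).symm
    _ = -trace (A * S) := by rw [transpose_mul, hA, hS, Matrix.mul_neg, trace_neg, trace_mul_comm]

end Matrix

section Jacobi

variable {n 𝕜 : Type*} [Fintype n] [DecidableEq n] [NontriviallyNormedField 𝕜]

theorem hasDerivAt_det {F : 𝕜 → Matrix n n 𝕜} {F' : Matrix n n 𝕜} {t : 𝕜}
    (hF : ∀ i j, HasDerivAt (fun s => F s i j) (F' i j) t) :
    HasDerivAt (fun s => (F s).det) (trace (adjugate (F t) * F')) t := by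
  have hsum : HasDerivAt (fun s => (F s).det)
      (∑ σ : Equiv.Perm n, Equiv.Perm.sign σ •
        ∑ i, (∏ j ∈ Finset.univ.erase i, F t (σ j) j) • F' (σ i) i) t := by
    simp only [det_apply]
    exact HasDerivAt.fun_sum fun σ _ =>
      (HasDerivAt.fun_finsetProd fun i _ => hF (σ i) i).const_smul _
  convert hsum using 1
  have hcol : ∀ i, (adjugate (F t) * F') i i = ((F t).updateCol i (fun k => F' k i)).det := by
    intro i
    rw [← cramer_apply, cramer_eq_adjugate_mulVec]
    rfl
  simp only [trace, diag, hcol, det_updateCol_eq_sum_perm, smul_eq_mul, Finset.smul_sum]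
  exact Finset.sum_comm

theorem hasDerivAt_det_of_hasDerivAt_eq_mul {F : 𝕜 → Matrix n n 𝕜} {M : Matrix n n 𝕜} {t : 𝕜}
    (hF : ∀ i j, HasDerivAt (fun s => F s i j) ((M * F t) i j) t) :
    HasDerivAt (fun s => (F s).det) ((F t).det * trace M) t := by
  simpa only [trace_adjugate_mul_mul_self] using hasDerivAt_det hF

end Jacobi

theorem volume_preservation_noncanonical_general
    (m : ℕ)
    (A : Matrix (Fin m) (Fin m) ℝ) (hA : Aᵀ = -A)
    (S : ℝ → Matrix (Fin m) (Fin m) ℝ) (hS : ∀ t : ℝ, (S t)ᵀ = S t)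
    (F : ℝ → Matrix (Fin m) (Fin m) ℝ)
    (hF : ∀ (t : ℝ) (i j : Fin m), HasDerivAt (fun s => F s i j) ((A * S t * F t) i j) t)
    (hF0 : F 0 = 1) :
    ∀ t : ℝ, (F t).det ^ 2 = 1 := by
  have hdet : ∀ t, HasDerivAt (fun s => (F s).det) 0 t := fun t => by
    simpa only [trace_mul_eq_zero_of_transpose_eq_neg hA (hS t), mul_zero] using
      hasDerivAt_det_of_hasDerivAt_eq_mul (hF t)
  intro t
  have hconst : (F t).det = (F 0).det :=
    is_const_of_deriv_eq_zero (fun s => (hdet s).differentiableAt) (fun s => (hdet s).deriv) t 0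
  rw [hconst, hF0, det_one, one_pow]

/-- Volume preservation of the Jacobian of a non-canonical Hamiltonian flow: if `A` is invertible
and antisymmetric, `S t` is symmetric for all `t`, and `F` solves the variational equation
`F' = A S F` with `F 0 = 1`, then `(det F t)² = 1` for all `t`. -/
theorem volume_preservation_noncanonical
    (m : ℕ) (hm : 0 < m)
    (A : Matrix (Fin m) (Fin m) ℝ) (hA : Aᵀ = -A) (hAinv : IsUnit A.det)
    (S : ℝ → Matrix (Fin m) (Fin m) ℝ) (hS : ∀ t : ℝ, (S t)ᵀ = S t)
    (F : ℝ → Matrix (Fin m) (Fin m) ℝ)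
    (hF : ∀ (t : ℝ) (i j : Fin m), HasDerivAt (fun s => F s i j) ((A * S t * F t) i j) t)
    (hF0 : F 0 = 1) :
    ∀ t : ℝ, (F t).det ^ 2 = 1 :=
  volume_preservation_noncanonical_general m A hA S hS F hF hF0
end

section
/- Let n be a positive natural number, let E and G be antisymmetric n×n real matrices, let F be any n×n real matrix, and let H : ℝⁿ × ℝⁿ → ℝ be differentiable and even in its second argument, i.e., H(θ, p) = H(θ, -p) for all θ, p. Suppose θ, p : ℝ → ℝⁿ are differentiable and solve the non-canonical dynamics θ'(t) = E·∇_θH(θ(t), p(t)) + F·∇_pH(θ(t), p(t)) and p'(t) = -Fᵀ·∇_θH(θ(t), p(t)) + G·∇_pH(θ(t), p(t)) for all t. Then the time-reversed, momentum-flipped curves θ̃(t) := θ(-t) and p̃(t) := -p(-t) solve the modified non-canonical dynamics θ̃'(t) = -E·∇_θH(θ̃(t), p̃(t)) + F·∇_pH(θ̃(t), p̃(t)) and p̃'(t) = -Fᵀ·∇_θH(θ̃(t), p̃(t)) - G·∇_pH(θ̃(t), p̃(t)) for all t. -/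
/-!
Evenness of `H` in `p` makes `∇_θH` even and `∇_pH` odd in `p`. Reversing time negates both
velocities and flipping the momentum negates `p'` once more, so after the substitution
`(θ, p) ↦ (θ(-t), -p(-t))` exactly the blocks `E` and `G` change sign.
-/

open Matrix

/-- Gradient of `H : ℝⁿ × ℝⁿ → ℝ` in its first argument, in the standard basis. -/
noncomputable def gradFst {n : ℕ} (H : (Fin n → ℝ) → (Fin n → ℝ) → ℝ)
    (θ p : Fin n → ℝ) : Fin n → ℝ :=
  fun i => fderiv ℝ (fun θ' => H θ' p) θ (Pi.single i 1)

/-- Gradient of `H : ℝⁿ × ℝⁿ → ℝ` in its second argument, in the standard basis. -/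
noncomputable def gradSnd {n : ℕ} (H : (Fin n → ℝ) → (Fin n → ℝ) → ℝ)
    (θ p : Fin n → ℝ) : Fin n → ℝ :=
  fun i => fderiv ℝ (fun p' => H θ p') p (Pi.single i 1)

section EvenFunction

variable {𝕜 E F : Type*} [NontriviallyNormedField 𝕜] [NormedAddCommGroup E] [NormedSpace 𝕜 E]
  [NormedAddCommGroup F] [NormedSpace 𝕜 F]

theorem fderiv_comp_neg (f : E → F) (x : E) :
    fderiv 𝕜 (fun y => f (-y)) x = -fderiv 𝕜 f (-x) := by
  simpa using fderiv_comp_smul (f := f) (x := x) (-1 : 𝕜)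

theorem Function.Even.fderiv_neg {f : E → F} (hf : f.Even) (x : E) :
    fderiv 𝕜 f (-x) = -fderiv 𝕜 f x := by
  have h := fderiv_comp_neg (𝕜 := 𝕜) f x
  rw [show (fun y => f (-y)) = f from funext hf] at h
  rw [h, neg_neg]

end EvenFunction

section Gradient

variable {n : ℕ} {H : (Fin n → ℝ) → (Fin n → ℝ) → ℝ}

theorem gradFst_neg_right (hH : ∀ θ, (H θ).Even) (θ p : Fin n → ℝ) :
    gradFst H θ (-p) = gradFst H θ p := by
  have h : (fun θ' => H θ' (-p)) = fun θ' => H θ' p := funext fun θ' => hH θ' p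
  unfold gradFst
  rw [h]

theorem gradSnd_neg_right (hH : ∀ θ, (H θ).Even) (θ p : Fin n → ℝ) :
    gradSnd H θ (-p) = -gradSnd H θ p := by
  funext i
  simp only [gradSnd, (hH θ).fderiv_neg, _root_.neg_apply, Pi.neg_apply]

end Gradient

theorem noncanonical_time_reversibility_general
    (n : ℕ)
    (E G : Matrix (Fin n) (Fin n) ℝ)
    (F : Matrix (Fin n) (Fin n) ℝ)
    (H : (Fin n → ℝ) → (Fin n → ℝ) → ℝ)
    (hHeven : ∀ (θ p : Fin n → ℝ), H θ p = H θ (-p))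
    (θ p : ℝ → (Fin n → ℝ))
    (hode₁ : ∀ t : ℝ, deriv θ t =
      E.mulVec (gradFst H (θ t) (p t)) + F.mulVec (gradSnd H (θ t) (p t)))
    (hode₂ : ∀ t : ℝ, deriv p t =
      -(Fᵀ.mulVec (gradFst H (θ t) (p t))) + G.mulVec (gradSnd H (θ t) (p t))) :
    (∀ t : ℝ, deriv (fun s => θ (-s)) t =
      -(E.mulVec (gradFst H (θ (-t)) (-p (-t)))) +
        F.mulVec (gradSnd H (θ (-t)) (-p (-t)))) ∧
    (∀ t : ℝ, deriv (fun s => -p (-s)) t =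
      -(Fᵀ.mulVec (gradFst H (θ (-t)) (-p (-t)))) -
        G.mulVec (gradSnd H (θ (-t)) (-p (-t)))) := by
  have hH : ∀ θ, (H θ).Even := fun θ p => (hHeven θ p).symm
  refine ⟨fun t => ?_, fun t => ?_⟩
  · rw [deriv_comp_neg, hode₁, gradFst_neg_right hH, gradSnd_neg_right hH, mulVec_neg]
    abel
  · have hflip : deriv (fun s => -p (-s)) t = deriv p (-t) := by
      rw [deriv.fun_neg, deriv_comp_neg, neg_neg]
    rw [hflip, hode₂, gradFst_neg_right hH, gradSnd_neg_right hH, mulVec_neg]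
    abel

/-- Pseudo time-reversibility of non-canonical Hamiltonian dynamics: if `(θ, p)` solves the
dynamics with structure matrix `[[E, F], [-Fᵀ, G]]` and `H` is even in the momentum, then
`(θ(-t), -p(-t))` solves the dynamics with structure matrix `[[-E, F], [-Fᵀ, -G]]`. -/
theorem noncanonical_time_reversibility
    (n : ℕ) (hn : 0 < n)
    (E G : Matrix (Fin n) (Fin n) ℝ) (hE : Eᵀ = -E) (hG : Gᵀ = -G)
    (F : Matrix (Fin n) (Fin n) ℝ)
    (H : (Fin n → ℝ) → (Fin n → ℝ) → ℝ)
    (hH : Differentiable ℝ (fun z : (Fin n → ℝ) × (Fin n → ℝ) => H z.1 z.2))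
    (hHeven : ∀ (θ p : Fin n → ℝ), H θ p = H θ (-p))
    (θ p : ℝ → (Fin n → ℝ)) (hθ : Differentiable ℝ θ) (hp : Differentiable ℝ p)
    (hode₁ : ∀ t : ℝ, deriv θ t =
      E.mulVec (gradFst H (θ t) (p t)) + F.mulVec (gradSnd H (θ t) (p t)))
    (hode₂ : ∀ t : ℝ, deriv p t =
      -(Fᵀ.mulVec (gradFst H (θ t) (p t))) + G.mulVec (gradSnd H (θ t) (p t))) :
    (∀ t : ℝ, deriv (fun s => θ (-s)) t =
      -(E.mulVec (gradFst H (θ (-t)) (-p (-t)))) +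
        F.mulVec (gradSnd H (θ (-t)) (-p (-t)))) ∧
    (∀ t : ℝ, deriv (fun s => -p (-s)) t =
      -(Fᵀ.mulVec (gradFst H (θ (-t)) (-p (-t)))) -
        G.mulVec (gradSnd H (θ (-t)) (-p (-t)))) :=
  noncanonical_time_reversibility_general n E G F H hHeven θ p hode₁ hode₂
end

section
/- Let n be a positive natural number, let G be an antisymmetric n×n real matrix with G ≠ 0, and let U : ℝⁿ → ℝ be differentiable. Then there is no twice continuously differentiable function H' : ℝⁿ × ℝⁿ → ℝ such that for all (θ, p) ∈ ℝⁿ × ℝⁿ, ∇_pH'(θ, p) = p and ∇_θH'(θ, p) = ∇U(θ) - G·p. Consequently, the magnetic non-canonical dynamics θ' = p, p' = -∇U(θ) + G·p cannot be realized as canonical Hamiltonian dynamics θ' = ∇_pH', p' = -∇_θH' for any C² Hamiltonian H'. -/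
open Matrix

/-!
If such an `H'` existed, the mixed partial `∂θⱼ ∂pᵢ H' = ∂θⱼ pᵢ` would vanish, while
`∂pᵢ ∂θⱼ H' = ∂pᵢ (∂ⱼU(θ) - (G p)ⱼ) = -Gⱼᵢ`. Mixed partials of a C² function commute, so `G = 0`.
-/

/-- The gradient of `f : ℝⁿ → ℝ` at `x`, with respect to the standard basis. -/
noncomputable def gradStd {n : ℕ} (f : (Fin n → ℝ) → ℝ) (x : Fin n → ℝ) : Fin n → ℝ :=
  fun i => fderiv ℝ f x (Pi.single i 1)

section PartialDerivatives

variable {𝕜 : Type*} [NontriviallyNormedField 𝕜]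
  {E F W : Type*} [NormedAddCommGroup E] [NormedSpace 𝕜 E] [NormedAddCommGroup F] [NormedSpace 𝕜 F]
  [NormedAddCommGroup W] [NormedSpace 𝕜 W] {f : E × F → W}

theorem DifferentiableAt.fderiv_partial_right_apply {x : E} {y : F}
    (hf : DifferentiableAt 𝕜 f (x, y)) (v : F) :
    fderiv 𝕜 (fun y' => f (x, y')) y v = fderiv 𝕜 f (x, y) (0, v) := by
  have h : HasFDerivAt (fun y' => f (x, y')) ((fderiv 𝕜 f (x, y)).comp (.inr 𝕜 E F)) y :=
    hf.hasFDerivAt.comp y (hasFDerivAt_prodMk_right x y)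
  rw [h.fderiv]
  rfl

theorem DifferentiableAt.fderiv_partial_left_apply {x : E} {y : F}
    (hf : DifferentiableAt 𝕜 f (x, y)) (u : E) :
    fderiv 𝕜 (fun x' => f (x', y)) x u = fderiv 𝕜 f (x, y) (u, 0) := by
  have h : HasFDerivAt (fun x' => f (x', y)) ((fderiv 𝕜 f (x, y)).comp (.inl 𝕜 E F)) x :=
    hf.hasFDerivAt.comp x (hasFDerivAt_prodMk_left x y)
  rw [h.fderiv]
  rfl

theorem ContDiff.fderiv_partial_comm [IsRCLikeNormedField 𝕜] (hf : ContDiff 𝕜 2 f)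
    (x : E) (y : F) (u : E) (v : F) :
    fderiv 𝕜 (fun x' => fderiv 𝕜 (fun y' => f (x', y')) y v) x u =
      fderiv 𝕜 (fun y' => fderiv 𝕜 (fun x' => f (x', y')) x u) y v := by
  have hf₁ : Differentiable 𝕜 f := hf.differentiable (by norm_num)
  have hf₂ : Differentiable 𝕜 (fderiv 𝕜 f) :=
    (hf.fderiv_right (m := 1) (by norm_num)).differentiable (by norm_num)
  have hv : Differentiable 𝕜 fun z => fderiv 𝕜 f z (0, v) := hf₂.clm_apply (differentiable_const _)
  have hu : Differentiable 𝕜 fun z => fderiv 𝕜 f z (u, 0) := hf₂.clm_apply (differentiable_const _)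
  simp only [fun x' => (hf₁ (x', y)).fderiv_partial_right_apply v,
    fun y' => (hf₁ (x, y')).fderiv_partial_left_apply u,
    (hv (x, y)).fderiv_partial_left_apply u, (hu (x, y)).fderiv_partial_right_apply v,
    fderiv_clm_apply (hf₂ (x, y)) (differentiableAt_const _), fderiv_const_apply,
    ContinuousLinearMap.comp_zero, zero_add, ContinuousLinearMap.flip_apply]
  exact (hf.contDiffAt.isSymmSndFDerivAt (by simp)) _ _

end PartialDerivatives

theorem Matrix.fderiv_mulVec_apply {𝕜 m n : Type*} [NontriviallyNormedField 𝕜] [Fintype n]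
    (A : Matrix m n 𝕜) (j : m) (x v : n → 𝕜) :
    fderiv 𝕜 (fun p => (A *ᵥ p) j) x v = (A *ᵥ v) j :=
  ((ContinuousLinearMap.proj j).comp
    ⟨A.mulVecLin, continuous_const.matrix_mulVec continuous_id⟩).fderiv ▸ rfl

theorem magnetic_dynamics_not_canonical_general
    (n : ℕ)
    (G : Matrix (Fin n) (Fin n) ℝ) (hG : G ≠ 0)
    (U : (Fin n → ℝ) → ℝ) :
    ¬ ∃ H' : (Fin n → ℝ) → (Fin n → ℝ) → ℝ,
        ContDiff ℝ 2 (fun z : (Fin n → ℝ) × (Fin n → ℝ) => H' z.1 z.2) ∧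
        (∀ θ p : Fin n → ℝ, gradStd (fun p' => H' θ p') p = p) ∧
        (∀ θ p : Fin n → ℝ, gradStd (fun θ' => H' θ' p) θ = gradStd U θ - G.mulVec p) := by
  rintro ⟨H', hH, hp, hθ⟩
  refine hG (Matrix.ext fun j i => ?_)
  have hcomm := hH.fderiv_partial_comm 0 0 (Pi.single j 1) (Pi.single i 1)
  have h_dp : (fun θ => fderiv ℝ (fun p => H' θ p) 0 (Pi.single i 1)) = fun _ => 0 :=
    funext fun θ => congrFun (hp θ 0) i
  have h_dθ : (fun p => fderiv ℝ (fun θ => H' θ p) 0 (Pi.single j 1)) =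
      fun p => gradStd U 0 j - (G *ᵥ p) j :=
    funext fun p => congrFun (hθ 0 p) j
  rw [h_dp, h_dθ, fderiv_const_apply, fderiv_const_sub] at hcomm
  simpa [G.fderiv_mulVec_apply, mulVec_single_one] using hcomm.symm

/-- The magnetic non-canonical dynamics `θ' = p`, `p' = -∇U(θ) + G p` with `G ≠ 0`
antisymmetric cannot be realized as canonical Hamiltonian dynamics: there is no C²
Hamiltonian `H'` with `∇_p H'(θ, p) = p` and `∇_θ H'(θ, p) = ∇U(θ) - G p`. -/
theorem magnetic_dynamics_not_canonical
    (n : ℕ) (hn : 0 < n)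
    (G : Matrix (Fin n) (Fin n) ℝ) (hGanti : Gᵀ = -G) (hG : G ≠ 0)
    (U : (Fin n → ℝ) → ℝ) (hU : Differentiable ℝ U) :
    ¬ ∃ H' : (Fin n → ℝ) → (Fin n → ℝ) → ℝ,
        ContDiff ℝ 2 (fun z : (Fin n → ℝ) × (Fin n → ℝ) => H' z.1 z.2) ∧
        (∀ θ p : Fin n → ℝ, gradStd (fun p' => H' θ p') p = p) ∧
        (∀ θ p : Fin n → ℝ, gradStd (fun θ' => H' θ' p) θ = gradStd U θ - G.mulVec p) :=
  magnetic_dynamics_not_canonical_general n G hG U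
end

section
/- Let n be a positive natural number, let G be an invertible antisymmetric n×n real matrix, and let ε ∈ ℝ. Set K := G⁻¹·(exp(εG) - I) and consider the 2n×2n block matrix J₂ = [[I, K], [0, exp(εG)]] (the Jacobian of the exact momentum sub-flow (θ, p) ↦ (θ + K·p, exp(εG)·p) of magnetic HMC). Then J₂ is symplectic with respect to the structure matrix A = [[0, I], [-I, G]], whose inverse is A⁻¹ = [[G, -I], [I, 0]]: that is, J₂ᵀ · A⁻¹ · J₂ = A⁻¹. -/
open Matrix

/-! With `E = exp (εG)`, the block identity `J₂ᵀ A⁻¹ J₂ = A⁻¹` reduces to `G K = E - 1`, which is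
the definition of `K`, and `Kᵀ E = K`. The latter holds because `Gᵀ = -G` makes `E` orthogonal
(`Eᵀ = exp (-εG) = E⁻¹`) and `(G⁻¹)ᵀ = -G⁻¹`, while `E` commutes with `G⁻¹`. -/

namespace Matrix

variable {m : Type*} [Fintype m] [DecidableEq m]

section CommRing

variable {R : Type*} [CommRing R]

theorem inv_fromBlocks_zero_one_neg_one (G : Matrix m m R) :
    (fromBlocks 0 1 (-1) G)⁻¹ = fromBlocks G (-1) 1 0 :=
  inv_eq_right_inv <| by simp [fromBlocks_multiply, fromBlocks_one]

theorem fromBlocks_one_zero_transpose_mul_mul {G K E : Matrix m m R} (hG : Gᵀ = -G)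
    (hGK : G * K = E - 1) (hKE : Kᵀ * E = K) :
    (fromBlocks 1 K 0 E)ᵀ * fromBlocks G (-1) 1 0 * fromBlocks 1 K 0 E =
      fromBlocks G (-1) 1 0 := by
  have hKG : Kᵀ * G = 1 - Eᵀ := by
    rw [← neg_neg G, Matrix.mul_neg, ← hG, ← transpose_mul, hGK, transpose_sub, transpose_one,
      neg_sub]
  simp only [fromBlocks_transpose, fromBlocks_multiply, transpose_one, transpose_zero,
    Matrix.one_mul, Matrix.mul_one, Matrix.mul_zero, Matrix.mul_neg, Matrix.neg_mul, add_zero]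
  rw [hGK, hKG, sub_add_cancel, Matrix.one_mul, hKE]
  congr 1 <;> abel

theorem commute_nonsing_inv_left {A B : Matrix m m R} (hA : IsUnit A.det) (h : Commute A B) :
    Commute A⁻¹ B := by
  have hu : IsUnit A := (isUnit_iff_isUnit_det A).mpr hA
  simpa only [coe_units_inv, hu.unit_spec] using h.units_inv_left (u := hu.unit)

theorem transpose_inv_mul_sub_one_mul {G E : Matrix m m R} (hG : Gᵀ = -G) (hdet : IsUnit G.det)
    (hGE : Commute G E) (hE : Eᵀ * E = 1) :
    (G⁻¹ * (E - 1))ᵀ * E = G⁻¹ * (E - 1) := by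
  have hinvT : G⁻¹ᵀ = -G⁻¹ := by
    rw [transpose_nonsing_inv, hG]
    exact inv_eq_left_inv (by rw [neg_mul_neg, nonsing_inv_mul _ hdet])
  have hcomm : Commute G⁻¹ E := commute_nonsing_inv_left hdet hGE
  calc (G⁻¹ * (E - 1))ᵀ * E = -((Eᵀ * E - E) * G⁻¹) := by
        rw [transpose_mul, hinvT, transpose_sub, transpose_one, Matrix.mul_neg, Matrix.neg_mul,
          mul_assoc, hcomm.eq, ← mul_assoc, Matrix.sub_mul, one_mul]
    _ = G⁻¹ * (E - 1) := by
        rw [hE, ← Matrix.neg_mul, neg_sub, (hcomm.sub_right (Commute.one_right _)).eq]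

end CommRing

variable {𝔸 : Type*} [NormedCommRing 𝔸] [NormedAlgebra ℚ 𝔸] [CompleteSpace 𝔸] in
theorem transpose_exp_mul_exp {A : Matrix m m 𝔸} (hA : Aᵀ = -A) :
    (NormedSpace.exp A)ᵀ * NormedSpace.exp A = 1 := by
  rw [← exp_transpose, hA, exp_neg]
  exact nonsing_inv_mul _ ((isUnit_iff_isUnit_det _).mp (isUnit_exp A))

end Matrix

theorem magnetic_momentum_subflow_symplectic_general
    (n : ℕ)
    (G : Matrix (Fin n) (Fin n) ℝ) (hGanti : Gᵀ = -G) (hG : IsUnit G.det)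
    (ε : ℝ)
    (K : Matrix (Fin n) (Fin n) ℝ) (hK : K = G⁻¹ * (NormedSpace.exp (ε • G) - 1))
    (J₂ : Matrix (Fin n ⊕ Fin n) (Fin n ⊕ Fin n) ℝ)
    (hJ₂ : J₂ = Matrix.fromBlocks 1 K 0 (NormedSpace.exp (ε • G)))
    (A : Matrix (Fin n ⊕ Fin n) (Fin n ⊕ Fin n) ℝ)
    (hA : A = Matrix.fromBlocks 0 1 (-1) G) :
    A⁻¹ = Matrix.fromBlocks G (-1) 1 0 ∧ J₂ᵀ * A⁻¹ * J₂ = A⁻¹ := by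
  have hAinv : A⁻¹ = fromBlocks G (-1) 1 0 := hA ▸ inv_fromBlocks_zero_one_neg_one G
  refine ⟨hAinv, ?_⟩
  have hE : (NormedSpace.exp (ε • G))ᵀ * NormedSpace.exp (ε • G) = 1 :=
    transpose_exp_mul_exp (by rw [transpose_smul, hGanti, smul_neg])
  have hGE : Commute G (NormedSpace.exp (ε • G)) := ((Commute.refl G).smul_right ε).exp_right
  rw [hAinv, hJ₂]
  refine fromBlocks_one_zero_transpose_mul_mul hGanti ?_ ?_
  · rw [hK, mul_nonsing_inv_cancel_left _ _ hG]
  · rw [hK]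
    exact transpose_inv_mul_sub_one_mul hGanti hG hGE hE

/-- The Jacobian `J₂ = [[I, G⁻¹(exp(εG) - I)], [0, exp(εG)]]` of the exact momentum
sub-flow of magnetic HMC is symplectic with respect to the structure matrix
`A = [[0, I], [-I, G]]`, whose inverse is `[[G, -I], [I, 0]]`. -/
theorem magnetic_momentum_subflow_symplectic
    (n : ℕ) (hn : 0 < n)
    (G : Matrix (Fin n) (Fin n) ℝ) (hGanti : Gᵀ = -G) (hG : IsUnit G.det)
    (ε : ℝ)
    (K : Matrix (Fin n) (Fin n) ℝ) (hK : K = G⁻¹ * (NormedSpace.exp (ε • G) - 1))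
    (J₂ : Matrix (Fin n ⊕ Fin n) (Fin n ⊕ Fin n) ℝ)
    (hJ₂ : J₂ = Matrix.fromBlocks 1 K 0 (NormedSpace.exp (ε • G)))
    (A : Matrix (Fin n ⊕ Fin n) (Fin n ⊕ Fin n) ℝ)
    (hA : A = Matrix.fromBlocks 0 1 (-1) G) :
    A⁻¹ = Matrix.fromBlocks G (-1) 1 0 ∧ J₂ᵀ * A⁻¹ * J₂ = A⁻¹ :=
  magnetic_momentum_subflow_symplectic_general n G hGanti hG ε K hK J₂ hJ₂ A hA
end
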